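/- C-decorated P-trees are Q-trees: let P be a PFunctor, C a type, g : C → P.A a function, and Q the PFunctor with shapes C and arities Q.B c := P.B (g c). For T : FM P A define the type Dec T of compatible C-decorations of T recursively by Dec (leaf a) := PUnit and Dec (node b f) := {c : C // g c = b} × (Π e : P.B b, Dec (f e)). Let u : FM Q A → FM P A be the relabelling map defined by u (leaf a) := leaf a and u (node c f) := node (g c) (fun e => u (f e)). Then the induced map FM Q A → Σ T : FM P A, Dec T, sending a Q-tree to its underlying P-tree together with the decoration of each node by its C-label, is a bijection. (Hence the value of the Baez–Dolan functor P⁺ on an object C → P.A is the set of P-trees with nodes compatibly decorated in C, which is the same as the set of Q-trees.) -/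
import Mathlib


universe u

/-- The type of `P`-trees with leaves decorated in `A`: the free `P`-structure on `A`. -/
inductive FM (P : PFunctor.{u}) (A : Type u) : Type u
  | leaf : A → FM P A
  | node : (a : P.A) → (P.B a → FM P A) → FM P A

/-- The type of compatible `C`-decorations of a `P`-tree, for `g : C → P.A`: each node
decorated by `b : P.A` receives a label `c : C` with `g c = b`. -/
def Dec {P : PFunctor.{u}} (C : Type u) (g : C → P.A) {A : Type u} : FM P A → Type u
  | .leaf _ => PUnit
  | .node b f => {c : C // g c = b} × ((e : P.B b) → Dec C g (f e))

/-- The relabelling map sending a `Q`-tree (for `Q` with shapes `C` and arities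
`P.B (g c)`) to its underlying `P`-tree. -/
def relabel {P : PFunctor.{u}} {C : Type u} (g : C → P.A) {A : Type u} :
    FM ⟨C, fun c => P.B (g c)⟩ A → FM P A
  | .leaf a => .leaf a
  | .node c f => .node (g c) fun e => relabel g (f e)

/-- The canonical decoration of the underlying `P`-tree of a `Q`-tree: each node is
decorated by its `C`-label. -/
def decOf {P : PFunctor.{u}} {C : Type u} (g : C → P.A) {A : Type u} :
    (T : FM ⟨C, fun c => P.B (g c)⟩ A) → Dec C g (relabel g T)
  | .leaf _ => PUnit.unit
  | .node c f => (⟨c, rfl⟩, fun e => decOf g (f e))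


def dec2tree {P : PFunctor.{u}} {C : Type u} (g : C → P.A) {A : Type u} :
    (T : FM P A) → Dec C g T → FM ⟨C, fun c => P.B (g c)⟩ A
  | .leaf a, _ => .leaf a
  | .node _ f, (⟨c, hc⟩, d) =>
      .node c (fun e => dec2tree g (f (hc ▸ e)) (d (hc ▸ e)))

theorem dec2tree_inv {P : PFunctor.{u}} {C : Type u} (g : C → P.A) {A : Type u} :
    (T : FM ⟨C, fun c => P.B (g c)⟩ A) → dec2tree g (relabel g T) (decOf g T) = T
  | .leaf a => rfl
  | .node c f => by
      simp only [relabel, decOf, dec2tree]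
      exact congrArg _ (funext fun e => dec2tree_inv g (f e))

theorem tree2dec_key {P : PFunctor.{u}} {C : Type u} (g : C → P.A) {A : Type u}
    (c : C) (b : P.A) (hc : g c = b) (f : P.B b → FM P A) (d : (e : P.B b) → Dec C g (f e))
    (F : (e : P.B (g c)) → Σ T' : FM P A, Dec C g T')
    (hF : ∀ e, F e = ⟨f (hc ▸ e), d (hc ▸ e)⟩) :
    (⟨FM.node (g c) (fun e => (F e).1), (⟨c, rfl⟩, fun e => (F e).2)⟩ :
      Σ T' : FM P A, Dec C g T') = ⟨FM.node b f, (⟨c, hc⟩, d)⟩ := by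
  subst hc
  have : F = fun e => ⟨f e, d e⟩ := funext hF
  subst this
  rfl

theorem tree2dec_inv {P : PFunctor.{u}} {C : Type u} (g : C → P.A) {A : Type u} :
    (T : FM P A) → (d : Dec C g T) →
      (⟨relabel g (dec2tree g T d), decOf g (dec2tree g T d)⟩ : Σ T' : FM P A, Dec C g T')
        = ⟨T, d⟩
  | .leaf a, _ => rfl
  | .node b f, (⟨c, hc⟩, d) =>
      tree2dec_key g c b hc f d
        (fun e => ⟨relabel g (dec2tree g (f (hc ▸ e)) (d (hc ▸ e))),
          decOf g (dec2tree g (f (hc ▸ e)) (d (hc ▸ e)))⟩)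
        (fun e => tree2dec_inv g (f (hc ▸ e)) (d (hc ▸ e)))

/-- `C`-decorated `P`-trees are `Q`-trees: the map sending a `Q`-tree to its underlying
`P`-tree together with its canonical decoration is a bijection. -/
theorem Qtrees_are_decorated_Ptrees (P : PFunctor.{u}) (C : Type u) (g : C → P.A)
    (A : Type u) :
    Function.Bijective (fun T : FM ⟨C, fun c => P.B (g c)⟩ A =>
      (⟨relabel g T, decOf g T⟩ : Σ T' : FM P A, Dec C g T')) := by
  constructor
  · intro T1 T2 h
    have := congrArg (fun p : Σ T' : FM P A, Dec C g T' => dec2tree g p.1 p.2) h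
    simpa [dec2tree_inv] using this
  · intro ⟨T, d⟩
    exact ⟨dec2tree g T d, tree2dec_inv g T d⟩
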